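/- (Surjunctivity of residually finite groups for finite alphabets) Let G be a residually finite group and A a finite set. Then every injective cellular automaton τ : A^G → A^G is surjective. -/
import Mathlib


/-- `τ : A^G → A^G` is a cellular automaton. -/
def IsCellularAutomaton {G A : Type*} [Group G] (τ : (G → A) → G → A) : Prop :=
  ∃ (M : Finset G) (μ : ({m // m ∈ M} → A) → A),
    ∀ (x : G → A) (g : G), τ x g = μ fun m => x (g * m.1)

section Aux

variable {G A : Type*} [Group G]

/-- The set of configurations fixed by (the shift action of) `H`. -/
def PerSet (H : Subgroup G) (A : Type*) : Set (G → A) :=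
  {x | ∀ h ∈ H, ∀ g, x (h * g) = x g}

lemma perSet_finite [Finite A] (H : Subgroup G) [H.FiniteIndex] :
    Finite (PerSet H A) := by
  have : Finite (G ⧸ H) := inferInstance
  apply Finite.of_injective
    (fun x : PerSet H A => fun q : G ⧸ H => x.1 (Quotient.out q)⁻¹)
  intro x₁ x₂ hx
  have key : ∀ x : PerSet H A, ∀ g : G,
      x.1 g = x.1 (Quotient.out (QuotientGroup.mk (s := H) g⁻¹))⁻¹ := by
    intro x g
    set r := Quotient.out (QuotientGroup.mk (s := H) g⁻¹) with hr
    have hout : (QuotientGroup.mk (s := H) r) = QuotientGroup.mk (s := H) g⁻¹ :=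
      Quotient.out_eq' _
    have hmem : r⁻¹ * g⁻¹ ∈ H := QuotientGroup.eq.mp hout
    have : r⁻¹ = (r⁻¹ * g⁻¹) * g := by group
    rw [this, x.2 _ hmem g]
  ext1
  funext g
  rw [key x₁ g, key x₂ g]
  exact congrFun hx _

/-- Construction of a periodic configuration agreeing with `y` on `Ω`. -/
lemma exists_periodic_approx [Nonempty A] (H : Subgroup G) (Ω : Finset G)
    (hH : ∀ a ∈ Ω, ∀ b ∈ Ω, a * b⁻¹ ∈ H → a = b) (y : G → A) :
    ∃ p ∈ PerSet H A, ∀ g ∈ Ω, p g = y g := by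
  classical
  set P : G → G → Prop := fun g w => w ∈ Ω ∧ g * w⁻¹ ∈ H with hP
  have huniq : ∀ g w₁ w₂, P g w₁ → P g w₂ → w₁ = w₂ := by
    intro g w₁ w₂ h₁ h₂
    apply hH _ h₁.1 _ h₂.1
    have : w₁ * w₂⁻¹ = (g * w₁⁻¹)⁻¹ * (g * w₂⁻¹) := by group
    rw [this]
    exact H.mul_mem (H.inv_mem h₁.2) h₂.2
  refine ⟨fun g => if hw : ∃ w, P g w then y hw.choose else Classical.arbitrary A, ?_, ?_⟩
  · intro h hh g
    have hiff : ∀ w, P (h * g) w ↔ P g w := by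
      intro w
      constructor <;> intro hw <;> refine ⟨hw.1, ?_⟩
      · have : g * w⁻¹ = h⁻¹ * (h * g * w⁻¹) := by group
        rw [this]; exact H.mul_mem (H.inv_mem hh) hw.2
      · have : h * g * w⁻¹ = h * (g * w⁻¹) := by group
        rw [this]; exact H.mul_mem hh hw.2
    by_cases hex : ∃ w, P g w
    · have hex' : ∃ w, P (h * g) w := ⟨hex.choose, (hiff _).mpr hex.choose_spec⟩
      beta_reduce
      rw [dif_pos hex, dif_pos hex']
      congr 1
      exact huniq g _ _ ((hiff _).mp hex'.choose_spec) hex.choose_spec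
    · have hex' : ¬ ∃ w, P (h * g) w := fun ⟨w, hw⟩ => hex ⟨w, (hiff w).mp hw⟩
      beta_reduce
      rw [dif_neg hex, dif_neg hex']
  · intro g hg
    have hex : ∃ w, P g w := ⟨g, hg, by rw [mul_inv_cancel]; exact H.one_mem⟩
    beta_reduce
    rw [dif_pos hex]
    congr 1
    exact huniq g _ _ hex.choose_spec ⟨hg, by rw [mul_inv_cancel]; exact H.one_mem⟩

/-- Residual finiteness gives a finite-index subgroup separating a finite set. -/
lemma exists_separating_subgroup
    (hrf : ∀ g : G, (∀ H : Subgroup G, H.FiniteIndex → g ∈ H) → g = 1)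
    (Ω : Finset G) :
    ∃ H : Subgroup G, H.FiniteIndex ∧ ∀ a ∈ Ω, ∀ b ∈ Ω, a * b⁻¹ ∈ H → a = b := by
  classical
  set S : Finset G := (Ω ×ˢ Ω).image (fun p => p.1 * p.2⁻¹) with hS
  have hchoice : ∀ g : G, g ≠ 1 → ∃ K : Subgroup G, K.FiniteIndex ∧ g ∉ K := by
    intro g hg
    by_contra hc
    push_neg at hc
    exact hg (hrf g fun K hK => hc K hK)
  set f : G → Subgroup G := fun g =>
    if hg : ∃ K : Subgroup G, K.FiniteIndex ∧ g ∉ K then hg.choose else ⊤ with hf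
  have hfFI : ∀ g, (f g).FiniteIndex := by
    intro g
    by_cases hg : ∃ K : Subgroup G, K.FiniteIndex ∧ g ∉ K
    · simp only [hf, dif_pos hg]; exact hg.choose_spec.1
    · simp only [hf, dif_neg hg]; infer_instance
  have hfnot : ∀ g, g ≠ 1 → g ∉ f g := by
    intro g hg
    have hx := hchoice g hg
    simp only [hf, dif_pos hx]
    exact hx.choose_spec.2
  refine ⟨⨅ g ∈ S, f g, Subgroup.finiteIndex_iInf' f (fun i _ => hfFI i), ?_⟩
  intro a ha b hb hab
  by_contra hne
  have hmemS : a * b⁻¹ ∈ S := Finset.mem_image.mpr ⟨(a, b), Finset.mem_product.mpr ⟨ha, hb⟩, rfl⟩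
  have hne1 : a * b⁻¹ ≠ 1 := fun h => hne (by
    have := mul_inv_eq_one.mp h; exact this)
  have hle : (⨅ g ∈ S, f g) ≤ f (a * b⁻¹) := biInf_le f hmemS
  exact hfnot _ hne1 (hle hab)

end Aux

/-- Surjunctivity of residually finite groups for finite alphabets: if `G` is
residually finite and `A` is finite, every injective cellular automaton
`τ : A^G → A^G` is surjective. -/
theorem residually_finite_surjunctive {G A : Type*} [Group G] [Finite A]
    (hrf : ∀ g : G, (∀ H : Subgroup G, H.FiniteIndex → g ∈ H) → g = 1)
    (τ : (G → A) → G → A) (hτ : IsCellularAutomaton τ)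
    (hinj : Function.Injective τ) :
    Function.Surjective τ := by
  classical
  rcases isEmpty_or_nonempty A with hA | hA
  · intro y
    exact (IsEmpty.false (y 1)).elim
  obtain ⟨M, μ, hμ⟩ := hτ
  -- τ preserves the periodic sets
  have hmaps : ∀ H : Subgroup G, Set.MapsTo τ (PerSet H A) (PerSet H A) := by
    intro H x hx h hh g
    rw [hμ, hμ]
    congr 1
    funext m
    have : h * g * m.1 = h * (g * m.1) := by group
    rw [this, hx h hh]
  -- every periodic point is in the range of τ
  have hper_range : ∀ (H : Subgroup G), H.FiniteIndex →
      ∀ p ∈ PerSet H A, p ∈ Set.range τ := by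
    intro H hFI p hp
    haveI := hFI
    haveI : Finite (PerSet H A) := perSet_finite H
    set e : PerSet H A → PerSet H A := fun x => ⟨τ x.1, hmaps H x.2⟩ with he
    have heinj : Function.Injective e := by
      intro a b hab
      apply Subtype.ext
      exact hinj (congrArg Subtype.val hab)
    have hesurj : Function.Surjective e := Finite.injective_iff_surjective.mp heinj
    obtain ⟨x, hx⟩ := hesurj ⟨p, hp⟩
    exact ⟨x.1, congrArg Subtype.val hx⟩
  -- approximation: for every y and finite window, some preimage matches
  have happrox : ∀ (y : G → A) (Ω : Finset G), ∃ x, ∀ g ∈ Ω, τ x g = y g := by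
    intro y Ω
    obtain ⟨H, hFI, hsep⟩ := exists_separating_subgroup hrf Ω
    obtain ⟨p, hp, hagree⟩ := exists_periodic_approx H Ω hsep y
    obtain ⟨x, hx⟩ := hper_range H hFI p hp
    exact ⟨x, fun g hg => by rw [hx, hagree g hg]⟩
  -- topology
  letI : TopologicalSpace A := ⊥
  haveI : DiscreteTopology A := ⟨rfl⟩
  have hcont : Continuous τ := by
    have : τ = fun x g => μ fun m => x (g * m.1) := by
      funext x g; exact hμ x g
    rw [this]
    apply continuous_pi
    intro g
    exact Continuous.comp continuous_of_discreteTopology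
      (continuous_pi fun m => continuous_apply _)
  have hclosed : IsClosed (Set.range τ) := (isCompact_range hcont).isClosed
  intro y
  have hmem : y ∈ closure (Set.range τ) := by
    rw [mem_closure_iff]
    intro U hU hyU
    obtain ⟨I, u, hu, hsub⟩ := isOpen_pi_iff.mp hU y hyU
    obtain ⟨x, hx⟩ := happrox y I
    refine ⟨τ x, hsub ?_, Set.mem_range_self x⟩
    intro i hi
    rw [hx i hi]
    exact (hu i hi).2
  rw [hclosed.closure_eq] at hmem
  exact hmem
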